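/- Let Π ⊂ V be a two-dimensional subspace which is totally isotropic for B (i.e., B vanishes identically on Π) and contains e_0, and let ℓ ⊂ Π be a one-dimensional subspace. Then there exists p ∈ P with p(Π) = span(e_0, e_1), and such that p(ℓ) = ℝe_0 if ℓ = ℝe_0, while p(ℓ) = ℝe_1 if ℓ ≠ ℝe_0. In particular, the set of such pairs (ℓ, Π) consists of exactly two P-orbits: the P-orbit of (ℝe_0, span(e_0,e_1)) and the P-orbit of (ℝe_1, span(e_0,e_1)). -/

import Mathlib

open Matrix

noncomputable section

/-- Gram matrix of the quadratic form `Q(x) = 2x₀x_{n+1} + 2x₁xₙ + x₂² + ⋯ + x_{n-1}²`. -/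
def Jmat (n : ℕ) : Matrix (Fin (n+2)) (Fin (n+2)) ℝ :=
  fun i j =>
    if (i.val = 0 ∧ j.val = n+1) ∨ (i.val = n+1 ∧ j.val = 0)
      ∨ (i.val = 1 ∧ j.val = n) ∨ (i.val = n ∧ j.val = 1) then 1
    else if i = j ∧ 2 ≤ i.val ∧ i.val ≤ n-1 then 1 else 0

/-- The symmetric bilinear form `B` of signature `(2,n)` on `V = ℝ^{n+2}`. -/
def Bf (n : ℕ) (u v : Fin (n+2) → ℝ) : ℝ := u ⬝ᵥ (Jmat n *ᵥ v)

/-- The standard basis vectors `e₀, …, e_{n+1}` of `V = ℝ^{n+2}`. -/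
def eV (n : ℕ) (i : Fin (n+2)) : Fin (n+2) → ℝ := Pi.single i 1

/-- The orthogonal group `O(2,n)`. -/
def Ogrp (n : ℕ) : Set (Matrix (Fin (n+2)) (Fin (n+2)) ℝ) :=
  {g | ∀ u v, Bf n (g *ᵥ u) (g *ᵥ v) = Bf n u v}

/-- The parabolic subgroup `P < O(2,n)` stabilizing the isotropic line `ℝe₀`. -/
def Pgrp (n : ℕ) : Set (Matrix (Fin (n+2)) (Fin (n+2)) ℝ) :=
  {g | g ∈ Ogrp n ∧ ∃ c : ℝ, c ≠ 0 ∧ g *ᵥ eV n 0 = c • eV n 0}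

variable {n : ℕ}

def i0 (n : ℕ) : Fin (n+2) := ⟨0, by omega⟩
def i1 (n : ℕ) : Fin (n+2) := ⟨1, by omega⟩
def iN (n : ℕ) : Fin (n+2) := ⟨n, by omega⟩
def iT (n : ℕ) : Fin (n+2) := ⟨n+1, by omega⟩

def mid (n : ℕ) : Finset (Fin (n+2)) := Finset.univ.filter (fun i => 2 ≤ i.val ∧ i.val ≤ n-1)

lemma Jmat_decomp (hn : 3 ≤ n) : Jmat n =
    single (i0 n) (iT n) 1 + single (i1 n) (iN n) 1 +
    single (iN n) (i1 n) 1 + single (iT n) (i0 n) 1 +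
    Matrix.diagonal (fun i => if 2 ≤ i.val ∧ i.val ≤ n-1 then (1:ℝ) else 0) := by
  ext i j
  simp only [Jmat, Matrix.add_apply, single, Matrix.diagonal_apply, of_apply,
    Fin.ext_iff, i0, i1, iN, iT]
  have hi := i.isLt
  have hj := j.isLt
  split_ifs <;> (try norm_num) <;> omega

lemma Bf_formula (hn : 3 ≤ n) (u v : Fin (n+2) → ℝ) :
    Bf n u v = u (i0 n) * v (iT n) + u (i1 n) * v (iN n) + u (iN n) * v (i1 n)
      + u (iT n) * v (i0 n) + ∑ i ∈ mid n, u i * v i := by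
  rw [Bf, Jmat_decomp hn]
  simp only [Matrix.add_mulVec, dotProduct_add, single_mulVec, one_mul]
  have h1 : ∀ (a : Fin (n+2)) (x : ℝ), u ⬝ᵥ Function.update (0 : Fin (n+2) → ℝ) a x = u a * x := by
    intro a x
    rw [show Function.update (0 : Fin (n+2) → ℝ) a x = Pi.single a x from rfl, dotProduct_single]
  rw [h1, h1, h1, h1]
  congr 1
  rw [dotProduct, mid]
  rw [Finset.sum_filter]
  apply Finset.sum_congr rfl
  intro i _
  simp only [mulVec_diagonal]
  split_ifs with h
  · ring
  · simp

-- index identities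
lemma i0_eq : i0 n = 0 := rfl
lemma i1_eq : i1 n = 1 := by
  apply Fin.ext
  rw [Fin.val_one']
  exact (Nat.mod_eq_of_lt (by omega)).symm

-- bilinearity
lemma Bf_add_left (u u' v : Fin (n+2) → ℝ) : Bf n (u + u') v = Bf n u v + Bf n u' v := by
  simp [Bf, add_dotProduct]
lemma Bf_add_right (u v v' : Fin (n+2) → ℝ) : Bf n u (v + v') = Bf n u v + Bf n u v' := by
  simp [Bf, mulVec_add, dotProduct_add]
lemma Bf_sub_left (u u' v : Fin (n+2) → ℝ) : Bf n (u - u') v = Bf n u v - Bf n u' v := by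
  simp [Bf, sub_dotProduct]
lemma Bf_sub_right (u v v' : Fin (n+2) → ℝ) : Bf n u (v - v') = Bf n u v - Bf n u v' := by
  simp [Bf, mulVec_sub, dotProduct_sub]
lemma Bf_smul_left (a : ℝ) (u v : Fin (n+2) → ℝ) : Bf n (a • u) v = a * Bf n u v := by
  simp [Bf, smul_dotProduct]
lemma Bf_smul_right (a : ℝ) (u v : Fin (n+2) → ℝ) : Bf n u (a • v) = a * Bf n u v := by
  simp [Bf, mulVec_smul, dotProduct_smul]

lemma Bf_symm (hn : 3 ≤ n) (u v : Fin (n+2) → ℝ) : Bf n u v = Bf n v u := by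
  rw [Bf_formula hn, Bf_formula hn]
  have : ∑ i ∈ mid n, u i * v i = ∑ i ∈ mid n, v i * u i :=
    Finset.sum_congr rfl (fun i _ => mul_comm _ _)
  rw [this]; ring

-- coordinates of basis vectors
lemma eV_apply (a b : Fin (n+2)) : eV n a b = if b = a then 1 else 0 := Pi.single_apply a 1 b

lemma eV_same (a : Fin (n+2)) : eV n a a = 1 := by rw [eV_apply]; simp

lemma eV_ne {a b : Fin (n+2)} (h : (b:ℕ) ≠ (a:ℕ)) : eV n a b = 0 := by
  rw [eV_apply, if_neg]
  exact fun hh => h (by rw [hh])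

lemma eV_mid_sum (a : Fin (n+2)) (ha : ¬ (2 ≤ (a:ℕ) ∧ (a:ℕ) ≤ n-1)) (v : Fin (n+2) → ℝ) :
    ∑ i ∈ mid n, (eV n a) i * v i = 0 := by
  apply Finset.sum_eq_zero
  intro i hi
  simp only [mid, Finset.mem_filter] at hi
  rw [eV_ne (by omega)]
  ring

-- evaluation of Bf with a basis vector on the left
lemma Bf_e0_left (hn : 3 ≤ n) (v : Fin (n+2) → ℝ) : Bf n (eV n (i0 n)) v = v (iT n) := by
  rw [Bf_formula hn, eV_mid_sum _ (by simp only [i0, Fin.val_mk]; omega),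
    eV_same, eV_ne (a := i0 n) (b := i1 n) (by simp only [i0, i1, Fin.val_mk]; omega),
    eV_ne (a := i0 n) (b := iN n) (by simp only [i0, iN, Fin.val_mk]; omega),
    eV_ne (a := i0 n) (b := iT n) (by simp only [i0, iT, Fin.val_mk]; omega)]
  ring

lemma Bf_e1_left (hn : 3 ≤ n) (v : Fin (n+2) → ℝ) : Bf n (eV n (i1 n)) v = v (iN n) := by
  rw [Bf_formula hn, eV_mid_sum _ (by simp only [i1, Fin.val_mk]; omega),
    eV_same, eV_ne (a := i1 n) (b := i0 n) (by simp only [i0, i1, Fin.val_mk]; omega),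
    eV_ne (a := i1 n) (b := iN n) (by simp only [i1, iN, Fin.val_mk]; omega),
    eV_ne (a := i1 n) (b := iT n) (by simp only [i1, iT, Fin.val_mk]; omega)]
  ring

lemma Bf_eN_left (hn : 3 ≤ n) (v : Fin (n+2) → ℝ) : Bf n (eV n (iN n)) v = v (i1 n) := by
  rw [Bf_formula hn, eV_mid_sum _ (by simp only [iN, Fin.val_mk]; omega),
    eV_same, eV_ne (a := iN n) (b := i0 n) (by simp only [i0, iN, Fin.val_mk]; omega),
    eV_ne (a := iN n) (b := i1 n) (by simp only [i1, iN, Fin.val_mk]; omega),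
    eV_ne (a := iN n) (b := iT n) (by simp only [iN, iT, Fin.val_mk]; omega)]
  ring

-- rank-one building block: Tmat x c *ᵥ v = Bf n x v • c
def Tmat (n : ℕ) (x c : Fin (n+2) → ℝ) : Matrix (Fin (n+2)) (Fin (n+2)) ℝ :=
  vecMulVec c (x ᵥ* Jmat n)

lemma Tmat_mulVec (x c v : Fin (n+2) → ℝ) : Tmat n x c *ᵥ v = Bf n x v • c := by
  funext i
  simp only [Tmat, mulVec, vecMulVec_apply, dotProduct, Bf, Pi.smul_apply, smul_eq_mul]
  rw [Finset.sum_congr rfl (fun j _ => mul_assoc (c i) _ _), ← Finset.mul_sum]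
  rw [mul_comm]
  congr 1
  simp only [vecMul, mulVec, dotProduct, Finset.sum_mul, Finset.mul_sum]
  rw [Finset.sum_comm]
  apply Finset.sum_congr rfl
  intro j _
  apply Finset.sum_congr rfl
  intro k _
  ring

-- Eichler transformation matrix
def Em (n : ℕ) (e x : Fin (n+2) → ℝ) (q : ℝ) : Matrix (Fin (n+2)) (Fin (n+2)) ℝ :=
  1 - Tmat n x e + Tmat n e x - q • Tmat n e e

lemma Em_mulVec (e x : Fin (n+2) → ℝ) (q : ℝ) (v : Fin (n+2) → ℝ) :
    Em n e x q *ᵥ v = v - Bf n x v • e + Bf n e v • x - (q * Bf n e v) • e := by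
  simp only [Em, sub_mulVec, add_mulVec, Tmat_mulVec, one_mulVec, smul_mulVec,
    smul_smul]

def Ogrp' (n : ℕ) : Set (Matrix (Fin (n+2)) (Fin (n+2)) ℝ) :=
  {g | ∀ u v, Bf n (g *ᵥ u) (g *ᵥ v) = Bf n u v}

lemma Em_mem (hn : 3 ≤ n) (e x : Fin (n+2) → ℝ) (q : ℝ)
    (hee : Bf n e e = 0) (hex : Bf n e x = 0) (hxx : Bf n x x = 2 * q) :
    Em n e x q ∈ Ogrp' n := by
  intro u v
  rw [Em_mulVec, Em_mulVec]
  simp only [Bf_add_left, Bf_add_right, Bf_sub_left, Bf_sub_right, Bf_smul_left, Bf_smul_right]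
  rw [hee, hex, Bf_symm hn x e, hex, hxx, Bf_symm hn u e, Bf_symm hn u x]
  ring

-- reflection matrix
def Rm (n : ℕ) (z : Fin (n+2) → ℝ) : Matrix (Fin (n+2)) (Fin (n+2)) ℝ :=
  1 + Tmat n z z

lemma Rm_mulVec (z v : Fin (n+2) → ℝ) : Rm n z *ᵥ v = v + Bf n z v • z := by
  simp only [Rm, add_mulVec, Tmat_mulVec, one_mulVec]

lemma Rm_mem (hn : 3 ≤ n) (z : Fin (n+2) → ℝ) (hz : Bf n z z = -2) : Rm n z ∈ Ogrp' n := by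
  intro u v
  have h : ∀ w, Rm n z *ᵥ w = w + Bf n z w • z := fun w => by
    simp only [Rm, add_mulVec, Tmat_mulVec, one_mulVec]
  rw [h, h]
  simp only [Bf_add_left, Bf_add_right, Bf_smul_left, Bf_smul_right]
  rw [hz, Bf_symm hn u z]
  ring

lemma Ogrp'_mul {g h : Matrix (Fin (n+2)) (Fin (n+2)) ℝ} (hg : g ∈ Ogrp' n) (hh : h ∈ Ogrp' n) :
    g * h ∈ Ogrp' n := by
  intro u v
  rw [← mulVec_mulVec, ← mulVec_mulVec, hg, hh]

-- pair values
lemma Bf_e0_e0 (hn : 3 ≤ n) : Bf n (eV n (i0 n)) (eV n (i0 n)) = 0 := by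
  rw [Bf_e0_left hn, eV_ne (by simp only [i0, iT, Fin.val_mk]; omega)]
lemma Bf_e0_e1 (hn : 3 ≤ n) : Bf n (eV n (i0 n)) (eV n (i1 n)) = 0 := by
  rw [Bf_e0_left hn, eV_ne (by simp only [i1, iT, Fin.val_mk]; omega)]
lemma Bf_e0_eN (hn : 3 ≤ n) : Bf n (eV n (i0 n)) (eV n (iN n)) = 0 := by
  rw [Bf_e0_left hn, eV_ne (by simp only [iN, iT, Fin.val_mk]; omega)]
lemma Bf_e1_e1 (hn : 3 ≤ n) : Bf n (eV n (i1 n)) (eV n (i1 n)) = 0 := by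
  rw [Bf_e1_left hn, eV_ne (by simp only [i1, iN, Fin.val_mk]; omega)]
lemma Bf_e1_eN (hn : 3 ≤ n) : Bf n (eV n (i1 n)) (eV n (iN n)) = 1 := by
  rw [Bf_e1_left hn, eV_same]
lemma Bf_eN_e1 (hn : 3 ≤ n) : Bf n (eV n (iN n)) (eV n (i1 n)) = 1 := by
  rw [Bf_eN_left hn, eV_same]
lemma Bf_eN_eN (hn : 3 ≤ n) : Bf n (eV n (iN n)) (eV n (iN n)) = 0 := by
  rw [Bf_eN_left hn, eV_ne (by simp only [i1, iN, Fin.val_mk]; omega)]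
lemma Bf_e1_e0 (hn : 3 ≤ n) : Bf n (eV n (i1 n)) (eV n (i0 n)) = 0 := by
  rw [Bf_e1_left hn, eV_ne (by simp only [i0, iN, Fin.val_mk]; omega)]
lemma Bf_eN_e0 (hn : 3 ≤ n) : Bf n (eV n (iN n)) (eV n (i0 n)) = 0 := by
  rw [Bf_eN_left hn, eV_ne (by simp only [i0, i1, Fin.val_mk]; omega)]

-- the unipotent element
def Um (n : ℕ) (s : ℝ) : Matrix (Fin (n+2)) (Fin (n+2)) ℝ :=
  Em n (eV n (i0 n)) (s • eV n (iN n)) 0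

lemma Um_mem (hn : 3 ≤ n) (s : ℝ) : Um n s ∈ Ogrp' n := by
  apply Em_mem hn
  · exact Bf_e0_e0 hn
  · rw [Bf_smul_right, Bf_e0_eN hn]; ring
  · rw [Bf_smul_left, Bf_smul_right, Bf_eN_eN hn]; ring

lemma Um_e0 (hn : 3 ≤ n) (s : ℝ) : Um n s *ᵥ eV n (i0 n) = eV n (i0 n) := by
  rw [Um, Em_mulVec, Bf_smul_left, Bf_eN_e0 hn, Bf_e0_e0 hn]
  simp

lemma Um_e1 (hn : 3 ≤ n) (s : ℝ) : Um n s *ᵥ eV n (i1 n) = eV n (i1 n) - s • eV n (i0 n) := by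
  rw [Um, Em_mulVec, Bf_smul_left, Bf_eN_e1 hn, Bf_e0_e1 hn]
  simp

-- the swap element
def Sw (n : ℕ) : Matrix (Fin (n+2)) (Fin (n+2)) ℝ :=
  Rm n (eV n (iN n) - eV n (i1 n))

lemma Sw_mem (hn : 3 ≤ n) : Sw n ∈ Ogrp' n := by
  apply Rm_mem hn
  rw [Bf_sub_left, Bf_sub_right, Bf_sub_right, Bf_eN_eN hn, Bf_eN_e1 hn, Bf_e1_eN hn,
    Bf_e1_e1 hn]
  ring

lemma Sw_e0 (hn : 3 ≤ n) : Sw n *ᵥ eV n (i0 n) = eV n (i0 n) := by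
  rw [Sw, Rm_mulVec, Bf_sub_left, Bf_eN_e0 hn, Bf_e1_e0 hn]
  simp

lemma Sw_eN (hn : 3 ≤ n) : Sw n *ᵥ eV n (iN n) = eV n (i1 n) := by
  rw [Sw, Rm_mulVec, Bf_sub_left, Bf_eN_eN hn, Bf_e1_eN hn]
  module

lemma val_i0 : ((i0 n : Fin (n+2)) : ℕ) = 0 := rfl
lemma val_i1 : ((i1 n : Fin (n+2)) : ℕ) = 1 := rfl
lemma val_iN : ((iN n : Fin (n+2)) : ℕ) = n := rfl
lemma val_iT : ((iT n : Fin (n+2)) : ℕ) = n+1 := rfl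

lemma step1 (hn : 3 ≤ n) (w : Fin (n+2) → ℝ) (hwT : w (iT n) = 0) (hww : Bf n w w = 0)
    (hind : ∀ a : ℝ, w ≠ a • eV n (i0 n)) :
    ∃ p ∈ Ogrp' n, p *ᵥ eV n (i0 n) = eV n (i0 n) ∧
      ∃ α β : ℝ, α ≠ 0 ∧ p *ᵥ w = β • eV n (i0 n) + α • eV n (i1 n) := by
  by_cases hb : w (iN n) = 0
  · -- w is already in the e0,e1 plane
    have hsum : ∑ i ∈ mid n, w i * w i = 0 := by
      rw [Bf_formula hn] at hww
      rw [hwT, hb] at hww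
      linarith [hww]
    have hmid : ∀ i ∈ mid n, w i = 0 := by
      intro i hi
      have h := (Finset.sum_eq_zero_iff_of_nonneg
        (fun i _ => mul_self_nonneg (w i))).mp hsum i hi
      exact mul_self_eq_zero.mp h
    have hw_eq : w = w (i0 n) • eV n (i0 n) + w (i1 n) • eV n (i1 n) := by
      funext k
      have hk := k.isLt
      simp only [Pi.add_apply, Pi.smul_apply, smul_eq_mul]
      by_cases hk0 : (k:ℕ) = 0
      · have hkk : k = i0 n := Fin.ext hk0
        subst hkk
        rw [eV_same, eV_ne (a := i1 n) (by simp only [val_i0, val_i1]; omega)]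
        ring
      by_cases hk1 : (k:ℕ) = 1
      · have hkk : k = i1 n := Fin.ext (by simp only [val_i1]; omega)
        subst hkk
        rw [eV_same, eV_ne (a := i0 n) (by simp only [val_i0, val_i1]; omega)]
        ring
      by_cases hkN : (k:ℕ) = n
      · have hkk : k = iN n := Fin.ext (by simp only [val_iN]; omega)
        subst hkk
        rw [hb, eV_ne (a := i0 n) (by simp only [val_i0, val_iN]; omega),
          eV_ne (a := i1 n) (by simp only [val_i1, val_iN]; omega)]
        ring
      by_cases hkT : (k:ℕ) = n+1
      · have hkk : k = iT n := Fin.ext (by simp only [val_iT]; omega)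
        subst hkk
        rw [hwT, eV_ne (a := i0 n) (by simp only [val_i0, val_iT]; omega),
          eV_ne (a := i1 n) (by simp only [val_i1, val_iT]; omega)]
        ring
      · have hkmid : k ∈ mid n := by
          simp only [mid, Finset.mem_filter, Finset.mem_univ, true_and]
          omega
        rw [hmid k hkmid, eV_ne (a := i0 n) (by simp only [val_i0]; omega),
          eV_ne (a := i1 n) (by simp only [val_i1]; omega)]
        ring
    refine ⟨1, fun u v => by rw [one_mulVec, one_mulVec], one_mulVec _, w (i1 n), w (i0 n),
      ?_, by rw [one_mulVec]; exact hw_eq⟩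
    intro h1
    exact hind (w (i0 n)) (by rw [hw_eq, h1]; simp [eV_same])
  · -- apply an Eichler transformation, then the swap
    set y : Fin (n+2) → ℝ :=
      fun k => if 2 ≤ (k:ℕ) ∧ (k:ℕ) ≤ n-1 then -(w k) / w (iN n) else 0 with hy
    set q : ℝ := Bf n y y / 2 with hq
    have hyval : ∀ k : Fin (n+2), y k = if 2 ≤ (k:ℕ) ∧ (k:ℕ) ≤ n-1
        then -(w k) / w (iN n) else 0 := fun k => rfl
    have hyN : y (iN n) = 0 := by rw [hyval, val_iN, if_neg (by omega)]
    have hyT : y (iT n) = 0 := by rw [hyval, val_iT, if_neg (by omega)]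
    have hy0 : y (i0 n) = 0 := by rw [hyval, val_i0, if_neg (by omega)]
    have hy1 : y (i1 n) = 0 := by rw [hyval, val_i1, if_neg (by omega)]
    have he1y : Bf n (eV n (i1 n)) y = 0 := by rw [Bf_e1_left hn, hyN]
    have hE : Em n (eV n (i1 n)) y q ∈ Ogrp' n :=
      Em_mem hn _ _ _ (Bf_e1_e1 hn) he1y (by rw [hq]; ring)
    have hEe0 : Em n (eV n (i1 n)) y q *ᵥ eV n (i0 n) = eV n (i0 n) := by
      rw [Em_mulVec, Bf_symm hn y _, Bf_e0_left hn, hyT, Bf_e1_e0 hn]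
      simp
    set c : ℝ := w (i1 n) - Bf n y w - q * w (iN n) with hc
    have hEw : Em n (eV n (i1 n)) y q *ᵥ w
        = w (i0 n) • eV n (i0 n) + c • eV n (i1 n) + w (iN n) • eV n (iN n) := by
      rw [Em_mulVec, Bf_e1_left hn]
      funext k
      have hk := k.isLt
      simp only [Pi.add_apply, Pi.sub_apply, Pi.smul_apply, smul_eq_mul]
      by_cases hk0 : (k:ℕ) = 0
      · have hkk : k = i0 n := Fin.ext hk0
        subst hkk
        rw [hy0, eV_same, eV_ne (a := i1 n) (by simp only [val_i0, val_i1]; omega),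
          eV_ne (a := iN n) (by simp only [val_i0, val_iN]; omega)]
        ring
      by_cases hk1 : (k:ℕ) = 1
      · have hkk : k = i1 n := Fin.ext (by simp only [val_i1]; omega)
        subst hkk
        rw [hy1, eV_same, eV_ne (a := i0 n) (by simp only [val_i0, val_i1]; omega),
          eV_ne (a := iN n) (by simp only [val_i1, val_iN]; omega), hc]
        ring
      by_cases hkN : (k:ℕ) = n
      · have hkk : k = iN n := Fin.ext (by simp only [val_iN]; omega)
        subst hkk
        rw [hyN, eV_same, eV_ne (a := i0 n) (by simp only [val_i0, val_iN]; omega),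
          eV_ne (a := i1 n) (by simp only [val_i1, val_iN]; omega)]
        ring
      by_cases hkT : (k:ℕ) = n+1
      · have hkk : k = iT n := Fin.ext (by simp only [val_iT]; omega)
        subst hkk
        rw [hwT, hyT, eV_ne (a := i0 n) (by simp only [val_i0, val_iT]; omega),
          eV_ne (a := i1 n) (by simp only [val_i1, val_iT]; omega),
          eV_ne (a := iN n) (by simp only [val_iN, val_iT]; omega)]
        ring
      · have hymid : y k = -(w k) / w (iN n) := by rw [hyval, if_pos (by omega)]
        rw [hymid, eV_ne (a := i0 n) (by simp only [val_i0]; omega),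
          eV_ne (a := i1 n) (by simp only [val_i1]; omega),
          eV_ne (a := iN n) (by simp only [val_iN]; omega)]
        field_simp
        ring
    have hc0 : c = 0 := by
      have hpres := hE w w
      rw [hEw, hww] at hpres
      simp only [Bf_add_left, Bf_add_right, Bf_smul_left, Bf_smul_right,
        Bf_e0_e0 hn, Bf_e0_e1 hn, Bf_e0_eN hn, Bf_e1_e0 hn, Bf_e1_e1 hn, Bf_e1_eN hn,
        Bf_eN_e0 hn, Bf_eN_e1 hn, Bf_eN_eN hn] at hpres
      have hcc : c * w (iN n) = 0 := by linarith [hpres]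
      rcases mul_eq_zero.mp hcc with h | h
      · exact h
      · exact absurd h hb
    refine ⟨Sw n * Em n (eV n (i1 n)) y q, Ogrp'_mul (Sw_mem hn) hE, ?_, w (iN n), w (i0 n),
      hb, ?_⟩
    · rw [← mulVec_mulVec, hEe0, Sw_e0 hn]
    · rw [← mulVec_mulVec, hEw, hc0]
      rw [mulVec_add, mulVec_add, mulVec_smul, mulVec_smul, mulVec_smul, Sw_e0 hn, Sw_eN hn]
      simp


-- span of {e0, x • e0 + y • e1} is span {e0, e1} when y ≠ 0
lemma span_pair_eq (hn : 3 ≤ n) {x y : ℝ} (hy : y ≠ 0) :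
    Submodule.span ℝ {eV n 0, x • eV n 0 + y • eV n 1} =
      Submodule.span ℝ {eV n 0, eV n 1} := by
  apply le_antisymm
  · rw [Submodule.span_le]
    rintro z (rfl | rfl)
    · exact Submodule.subset_span (by simp)
    · exact Submodule.add_mem _
        (Submodule.smul_mem _ _ (Submodule.subset_span (by simp)))
        (Submodule.smul_mem _ _ (Submodule.subset_span (by simp)))
  · rw [Submodule.span_le]
    rintro z (rfl | rfl)
    · exact Submodule.subset_span (by simp)
    · have hx0 : eV n 0 ∈ Submodule.span ℝ {eV n 0, x • eV n 0 + y • eV n 1} :=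
        Submodule.subset_span (by simp)
      have hxy : x • eV n 0 + y • eV n 1 ∈
          Submodule.span ℝ {eV n 0, x • eV n 0 + y • eV n 1} :=
        Submodule.subset_span (by simp)
      have key : y⁻¹ • ((x • eV n 0 + y • eV n 1) - x • eV n 0) = eV n 1 := by
        rw [add_sub_cancel_left, smul_smul, inv_mul_cancel₀ hy, one_smul]
      have hm := Submodule.smul_mem _ y⁻¹ (Submodule.sub_mem _ hxy (Submodule.smul_mem _ x hx0))
      rwa [key] at hm


/-- For any totally isotropic 2-plane `Π ∋ e₀` and any line `ℓ ⊆ Π`,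
there is `p ∈ P` carrying `Π` to `span(e₀, e₁)`, carrying `ℓ` to `ℝe₀` when `ℓ = ℝe₀`
and to `ℝe₁` when `ℓ ≠ ℝe₀`. -/
theorem two_P_orbits_of_pointed_photons (n : ℕ) (hn : 3 ≤ n)
    (W : Submodule ℝ (Fin (n+2) → ℝ)) (hdim : Module.finrank ℝ W = 2)
    (hiso : ∀ u ∈ W, ∀ v ∈ W, Bf n u v = 0) (he0 : eV n 0 ∈ W)
    (L : Submodule ℝ (Fin (n+2) → ℝ)) (hLW : L ≤ W) (hL : Module.finrank ℝ L = 1) :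
    ∃ p ∈ Pgrp n,
      Submodule.map (Matrix.mulVecLin p) W = Submodule.span ℝ {eV n 0, eV n 1} ∧
      (L = Submodule.span ℝ {eV n 0} →
        Submodule.map (Matrix.mulVecLin p) L = Submodule.span ℝ {eV n 0}) ∧
      (L ≠ Submodule.span ℝ {eV n 0} →
        Submodule.map (Matrix.mulVecLin p) L = Submodule.span ℝ {eV n 1}) := by
  have he0ne : eV n 0 ≠ 0 := by
    intro h
    have h1 := congrFun h (0 : Fin (n+2))
    rw [eV_same] at h1
    exact one_ne_zero h1
  -- find w ∈ W outside the line through e0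
  have hspan0 : Submodule.span ℝ {eV n 0} ≤ W := by
    rw [Submodule.span_le, Set.singleton_subset_iff]; exact he0
  have hlt : Submodule.span ℝ {eV n 0} < W := by
    apply lt_of_le_of_ne hspan0
    intro h
    rw [← h, finrank_span_singleton he0ne] at hdim
    omega
  obtain ⟨w, hwW, hwns⟩ := SetLike.exists_of_lt hlt
  -- properties of w
  have hwT : w (iT n) = 0 := by
    have h := hiso (eV n 0) he0 w hwW
    rw [← i0_eq, Bf_e0_left hn] at h
    exact h
  have hww := hiso w hwW w hwW
  have hind : ∀ a : ℝ, w ≠ a • eV n (i0 n) := by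
    intro a h
    apply hwns
    rw [h, i0_eq]
    exact Submodule.smul_mem _ _ (Submodule.mem_span_singleton_self _)
  obtain ⟨p1, hp1O, hp1e0, α, β, hα, hp1w⟩ := step1 hn w hwT hww hind
  rw [i0_eq] at hp1e0
  rw [i0_eq, i1_eq] at hp1w
  -- W as a span
  have hWspan : W = Submodule.span ℝ {eV n 0, w} := by
    symm
    apply Submodule.eq_of_le_of_finrank_le
    · rw [Submodule.span_le, Set.insert_subset_iff, Set.singleton_subset_iff]
      exact ⟨he0, hwW⟩
    · rw [hdim]
      have hlt2 : Submodule.span ℝ {eV n 0} < Submodule.span ℝ {eV n 0, w} := by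
        apply lt_of_le_of_ne (Submodule.span_mono (by simp))
        intro heq
        exact hwns (heq ▸ Submodule.subset_span (by simp))
      have h2 := Submodule.finrank_lt_finrank_of_lt hlt2
      rw [finrank_span_singleton he0ne] at h2
      omega
  -- the plane map, for suitable p
  have hmap : ∀ p : Matrix (Fin (n+2)) (Fin (n+2)) ℝ, p *ᵥ eV n 0 = eV n 0 →
      (∃ x y : ℝ, y ≠ 0 ∧ p *ᵥ w = x • eV n 0 + y • eV n 1) →
      Submodule.map (Matrix.mulVecLin p) W = Submodule.span ℝ {eV n 0, eV n 1} := by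
    rintro p hpe0 ⟨x, y, hy, hpw⟩
    rw [hWspan, Submodule.map_span, Set.image_pair]
    simp only [Matrix.mulVecLin_apply]
    rw [hpe0, hpw]
    exact span_pair_eq hn hy
  -- generator of L
  have hLbot : L ≠ ⊥ := by
    intro h
    rw [h, finrank_bot] at hL
    omega
  obtain ⟨v, hvL, hvne⟩ := Submodule.exists_mem_ne_zero_of_ne_bot hLbot
  have hLspan : L = Submodule.span ℝ {v} := by
    symm
    apply Submodule.eq_of_le_of_finrank_le
    · rw [Submodule.span_le, Set.singleton_subset_iff]; exact hvL
    · rw [hL, finrank_span_singleton hvne]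
  have hvW : v ∈ Submodule.span ℝ {eV n 0, w} := hWspan ▸ hLW hvL
  obtain ⟨a, b, hab⟩ := Submodule.mem_span_pair.mp hvW
  by_cases hL0 : L = Submodule.span ℝ {eV n 0}
  · -- use p1 itself
    refine ⟨p1, ⟨hp1O, 1, one_ne_zero, by rw [hp1e0, one_smul]⟩,
      hmap p1 hp1e0 ⟨β, α, hα, hp1w⟩, ?_, fun h => absurd hL0 h⟩
    intro _
    rw [hL0, Submodule.map_span, Set.image_singleton, Matrix.mulVecLin_apply, hp1e0]
  · -- compose with a unipotent element
    have hbne : b ≠ 0 := by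
      intro hb0
      apply hL0
      rw [hLspan, ← hab, hb0, zero_smul, add_zero]
      have hane : a ≠ 0 := by
        intro ha0
        rw [← hab, hb0, ha0, zero_smul, zero_smul, add_zero] at hvne
        exact hvne rfl
      exact Submodule.span_singleton_smul_eq (IsUnit.mk0 a hane) _
    set s : ℝ := (a + b*β)/(b*α) with hs
    have hUe0 : Um n s *ᵥ eV n 0 = eV n 0 := by rw [← i0_eq]; exact Um_e0 hn s
    have hUe1 : Um n s *ᵥ eV n 1 = eV n 1 - s • eV n 0 := by
      rw [← i0_eq, ← i1_eq]; exact Um_e1 hn s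
    have hpe0 : (Um n s * p1) *ᵥ eV n 0 = eV n 0 := by
      rw [← mulVec_mulVec, hp1e0, hUe0]
    have hpw : (Um n s * p1) *ᵥ w = (β - α*s) • eV n 0 + α • eV n 1 := by
      rw [← mulVec_mulVec, hp1w, mulVec_add, mulVec_smul, mulVec_smul, hUe0, hUe1]
      module
    have hpv : (Um n s * p1) *ᵥ v = (b*α) • eV n 1 := by
      rw [← hab, mulVec_add, mulVec_smul, mulVec_smul, ← mulVec_mulVec, ← mulVec_mulVec,
        hp1e0, hUe0, hp1w, mulVec_add, mulVec_smul, mulVec_smul, hUe0, hUe1]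
      have hcoef : a + b*β - b*α*s = 0 := by
        rw [hs]
        field_simp
        ring
      have hexpand : a • eV n 0 + b • (β • eV n 0 + α • (eV n 1 - s • eV n 0))
          = (a + b*β - b*α*s) • eV n 0 + (b*α) • eV n 1 := by module
      rw [hexpand, hcoef, zero_smul, zero_add]
    refine ⟨Um n s * p1, ⟨Ogrp'_mul (Um_mem hn s) hp1O, 1, one_ne_zero,
      by rw [hpe0, one_smul]⟩,
      hmap _ hpe0 ⟨β - α*s, α, hα, hpw⟩, fun h => absurd h hL0, ?_⟩
    intro _
    rw [hLspan, Submodule.map_span, Set.image_singleton, Matrix.mulVecLin_apply, hpv]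
    exact Submodule.span_singleton_smul_eq (IsUnit.mk0 _ (mul_ne_zero hbne hα)) _
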